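/- arXiv:math/0406344 — 5 statements merged into one kernel-verified Lean document; each statement's English description precedes it below -/
import Mathlib

section
/- Let Γ̃₁(z,w) = (|z−w|² − (1/4)|z²−w²|²)·log|(z−w)/(1−z·conj(w))|² + (1/8)(1−|z|²)(1−|w|²)·[7 − |z|² − |w|² − |zw|² − 4·Re(z·conj(w)) − 2(1−|z|²)(1−|w|²)(1−|zw|²)/|1−z·conj(w)|²]. Then for all z, w ∈ D with z ≠ w, (1/8)·(1−|z|²)³(1−|w|²)³/|1−z·conj(w)|² ≤ Γ̃₁(z,w) ≤ (1/8)·((1−|z|²)³(1−|w|²)³/|1−z·conj(w)|⁴)·(|1−z·conj(w)|² + 4 − |z+w|²). -/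
open Complex MeasureTheory Metric Set

noncomputable section

/-- The open unit disk in ℂ. -/
def unitDisk : Set ℂ := Metric.ball 0 1

/-- The closed unit disk in ℂ. -/
def closedDisk : Set ℂ := Metric.closedBall 0 1

/-- The unit circle in ℂ. -/
def unitCircle : Set ℂ := Metric.sphere 0 1

/-- The normalized area measure dΣ = dx dy / π on ℂ. -/
def dSigma : Measure ℂ := (ENNReal.ofReal (1 / Real.pi)) • (volume : Measure ℂ)

/-- The normalized Laplacian Δ = (1/4)(∂²ₓ + ∂²_y) of a real-valued function on ℂ. -/
def lapR (u : ℂ → ℝ) (z : ℂ) : ℝ :=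
  (1/4) * (fderiv ℝ (fun w => fderiv ℝ u w 1) z 1
    + fderiv ℝ (fun w => fderiv ℝ u w Complex.I) z Complex.I)

/-- The normalized Laplacian Δ = (1/4)(∂²ₓ + ∂²_y) of a complex-valued function on ℂ. -/
def lapC (u : ℂ → ℂ) (z : ℂ) : ℂ :=
  (1/4) * (fderiv ℝ (fun w => fderiv ℝ u w 1) z 1
    + fderiv ℝ (fun w => fderiv ℝ u w Complex.I) z Complex.I)

/-- Membership in the weighted Bergman space A²(𝔻, ω): holomorphic on the unit disk
and square integrable against the weight ω with respect to dΣ. -/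
def MemA2 (ω : ℂ → ℝ) (f : ℂ → ℂ) : Prop :=
  DifferentiableOn ℂ f unitDisk ∧
    IntegrableOn (fun z => ‖f z‖ ^ 2 * ω z) unitDisk dSigma

/-- `k` reproduces at `w` for the weight `ω`. -/
def Reproduces (ω : ℂ → ℝ) (k : ℂ → ℂ) (w : ℂ) : Prop :=
  MemA2 ω k ∧ ∀ f : ℂ → ℂ, MemA2 ω f →
    ∫ z in unitDisk, f z * (starRingEnd ℂ) (k z) * (ω z : ℂ) ∂dSigma = f w

/-- A bounded (complex-valued) harmonic function on the unit disk. -/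
def BoundedHarmonicC (h : ℂ → ℂ) : Prop :=
  ContDiffOn ℝ 2 h unitDisk ∧ (∀ z ∈ unitDisk, lapC h z = 0) ∧
    ∃ M : ℝ, ∀ z ∈ unitDisk, ‖h z‖ ≤ M

/-- A bounded real-valued harmonic function on the unit disk. -/
def BoundedHarmonicR (h : ℂ → ℝ) : Prop :=
  ContDiffOn ℝ 2 h unitDisk ∧ (∀ z ∈ unitDisk, lapR h z = 0) ∧
    ∃ M : ℝ, ∀ z ∈ unitDisk, |h z| ≤ M

/-- The explicit candidate Γ̃₁ for the Green function of the weighted biharmonic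
operator Δ(1-|z|²)⁻¹Δ on the unit disk. -/
def Gamma1 (z w : ℂ) : ℝ :=
  (‖z - w‖ ^ 2 - (1 / 4) * ‖z ^ 2 - w ^ 2‖ ^ 2) *
      Real.log (‖(z - w) / (1 - z * (starRingEnd ℂ) w)‖ ^ 2)
    + (1 / 8) * (1 - ‖z‖ ^ 2) * (1 - ‖w‖ ^ 2) *
      (7 - ‖z‖ ^ 2 - ‖w‖ ^ 2 - ‖z * w‖ ^ 2 - 4 * (z * (starRingEnd ℂ) w).re
        - 2 * (1 - ‖z‖ ^ 2) * (1 - ‖w‖ ^ 2) * (1 - ‖z * w‖ ^ 2) /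
            ‖1 - z * (starRingEnd ℂ) w‖ ^ 2)


lemma log_lower_aux {t : ℝ} (h0 : 0 < t) (h1 : t ≤ 1) :
    (t - t⁻¹) / 2 ≤ Real.log t := by
  set f : ℝ → ℝ := fun x => Real.log x - (x - x⁻¹) / 2 with hf
  have hder : ∀ x : ℝ, 0 < x → HasDerivAt f (x⁻¹ - (1 - -(x^2)⁻¹) / 2) x := by
    intro x hx
    exact (Real.hasDerivAt_log hx.ne').sub
      (((hasDerivAt_id x).sub (hasDerivAt_inv hx.ne')).div_const 2)
  have hanti : AntitoneOn f (Set.Icc t 1) := by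
    apply antitoneOn_of_deriv_nonpos (convex_Icc t 1)
    · intro x hx
      have hx0 : 0 < x := lt_of_lt_of_le h0 hx.1
      exact ((hder x hx0).continuousAt).continuousWithinAt
    · intro x hx
      rw [interior_Icc] at hx
      have hx0 : 0 < x := lt_of_lt_of_le h0 hx.1.le
      exact (hder x hx0).differentiableAt.differentiableWithinAt
    · intro x hx
      rw [interior_Icc] at hx
      have hx0 : 0 < x := lt_of_lt_of_le h0 hx.1.le
      rw [(hder x hx0).deriv]
      have key : x⁻¹ - (1 - -(x^2)⁻¹) / 2 = -(x - 1)^2 / (2 * x^2) := by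
        field_simp
        ring
      rw [key]
      apply div_nonpos_of_nonpos_of_nonneg
      · nlinarith [sq_nonneg (x - 1)]
      · positivity
  have h := hanti (Set.left_mem_Icc.mpr h1) (Set.right_mem_Icc.mpr h1) h1
  simp only [hf, Real.log_one, inv_one] at h
  linarith

lemma log_upper_aux {t : ℝ} (h0 : 0 < t) (h1 : t ≤ 1) :
    Real.log t ≤ (t - 1) - (1 - t)^2 / 2 := by
  set f : ℝ → ℝ := fun x => Real.log x - (x - 1) + (1 - x)^2 / 2 with hf
  have hder : ∀ x : ℝ, 0 < x → HasDerivAt f (x⁻¹ - 1 + (2 * (1-x)^1 * (-1)) / 2) x := by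
    intro x hx
    have h1' : HasDerivAt (fun x : ℝ => x - 1) 1 x := (hasDerivAt_id x).sub_const 1
    have h2' : HasDerivAt (fun x : ℝ => (1 - x)^2 / 2) ((2 * (1-x)^1 * (-1)) / 2) x := by
      have : HasDerivAt (fun x : ℝ => (1 - x)) (-1) x := by
        simpa using (hasDerivAt_id x).const_sub 1
      exact (this.pow 2).div_const 2
    exact ((Real.hasDerivAt_log hx.ne').sub h1').add h2'
  have hmono : MonotoneOn f (Set.Icc t 1) := by
    apply monotoneOn_of_deriv_nonneg (convex_Icc t 1)
    · intro x hx
      have hx0 : 0 < x := lt_of_lt_of_le h0 hx.1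
      exact ((hder x hx0).continuousAt).continuousWithinAt
    · intro x hx
      rw [interior_Icc] at hx
      have hx0 : 0 < x := lt_of_lt_of_le h0 hx.1.le
      exact (hder x hx0).differentiableAt.differentiableWithinAt
    · intro x hx
      rw [interior_Icc] at hx
      have hx0 : 0 < x := lt_of_lt_of_le h0 hx.1.le
      rw [(hder x hx0).deriv]
      have key : x⁻¹ - 1 + (2 * (1-x)^1 * (-1)) / 2 = (x - 1)^2 / x := by
        field_simp
        ring
      rw [key]
      positivity
  have h := hmono (Set.left_mem_Icc.mpr h1) (Set.right_mem_Icc.mpr h1) h1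
  simp only [hf, Real.log_one] at h
  nlinarith [h]

lemma key_ineq_aux (a s m : ℝ) (ha : 0 < a) (hs : 0 < s) (hm : 0 ≤ m) :
    s^3 / (8*(a+s)) ≤
      (a*(a+2*s+2*m)/4) * Real.log (a/(a+s)) + (s/8)*(2*(a+2*s+2*m) - s - 2*s*m/(a+s)) ∧
    (a*(a+2*s+2*m)/4) * Real.log (a/(a+s)) + (s/8)*(2*(a+2*s+2*m) - s - 2*s*m/(a+s)) ≤
      s^3 * ((a+s) + (a+2*s+2*m)) / (8*(a+s)^2) := by
  have hb : 0 < a + s := by linarith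
  have ht0 : 0 < a / (a+s) := div_pos ha hb
  have ht1 : a / (a+s) ≤ 1 := by
    rw [div_le_one hb]; linarith
  have hcoef : (0:ℝ) ≤ a*(a+2*s+2*m)/4 := by positivity
  have ha' : a ≠ 0 := ha.ne'
  have hb' : a + s ≠ 0 := hb.ne'
  constructor
  · have h1 := log_lower_aux ht0 ht1
    have h2 : (a*(a+2*s+2*m)/4) * ((a/(a+s) - (a/(a+s))⁻¹)/2) ≤
        (a*(a+2*s+2*m)/4) * Real.log (a/(a+s)) :=
      mul_le_mul_of_nonneg_left h1 hcoef
    have h3 : (a*(a+2*s+2*m)/4) * ((a/(a+s) - (a/(a+s))⁻¹)/2)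
        + (s/8)*(2*(a+2*s+2*m) - s - 2*s*m/(a+s)) = s^3 / (8*(a+s)) := by
      rw [inv_div]
      field_simp
      ring
    linarith
  · have h1 := log_upper_aux ht0 ht1
    have h2 : (a*(a+2*s+2*m)/4) * Real.log (a/(a+s)) ≤
        (a*(a+2*s+2*m)/4) * ((a/(a+s) - 1) - (1 - a/(a+s))^2/2) :=
      mul_le_mul_of_nonneg_left h1 hcoef
    have h3 : (a*(a+2*s+2*m)/4) * ((a/(a+s) - 1) - (1 - a/(a+s))^2/2)
        + (s/8)*(2*(a+2*s+2*m) - s - 2*s*m/(a+s))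
        = s^3 * ((a+s) + (a+2*s+2*m)) / (8*(a+s)^2) := by
      field_simp
      ring
    linarith

lemma nsq_aux (u : ℂ) : ‖u‖^2 = u.re^2 + u.im^2 := by
  rw [Complex.sq_norm, Complex.normSq_apply]; ring

/-- two-sided bounds for Γ̃₁ on the unit disk. -/
theorem statement5 :
    ∀ z ∈ unitDisk, ∀ w ∈ unitDisk, z ≠ w →
      (1 / 8) * ((1 - ‖z‖ ^ 2) ^ 3 * (1 - ‖w‖ ^ 2) ^ 3) /
          ‖1 - z * (starRingEnd ℂ) w‖ ^ 2 ≤ Gamma1 z w ∧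
      Gamma1 z w ≤
        (1 / 8) * ((1 - ‖z‖ ^ 2) ^ 3 * (1 - ‖w‖ ^ 2) ^ 3 /
            ‖1 - z * (starRingEnd ℂ) w‖ ^ 4) *
          (‖1 - z * (starRingEnd ℂ) w‖ ^ 2 + 4 - ‖z + w‖ ^ 2) := by
  intro z hz w hw hzw
  have hz1 : ‖z‖ < 1 := by simpa [unitDisk, mem_ball, dist_zero_right] using hz
  have hw1 : ‖w‖ < 1 := by simpa [unitDisk, mem_ball, dist_zero_right] using hw
  have hp1 : ‖z‖^2 < 1 := by nlinarith [norm_nonneg z]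
  have hq1 : ‖w‖^2 < 1 := by nlinarith [norm_nonneg w]
  have hA : 0 < ‖z - w‖^2 := by
    have h0 : z - w ≠ 0 := sub_ne_zero.mpr hzw
    exact pow_pos (norm_pos_iff.mpr h0) 2
  have hS : 0 < (1 - ‖z‖^2) * (1 - ‖w‖^2) := by nlinarith
  have hM : (0:ℝ) ≤ 1 - ‖z‖^2 * ‖w‖^2 := by nlinarith [norm_nonneg z, norm_nonneg w, sq_nonneg (‖z‖*‖w‖)]
  -- identities
  have hB : ‖1 - z * (starRingEnd ℂ) w‖^2
      = ‖z - w‖^2 + (1 - ‖z‖^2) * (1 - ‖w‖^2) := by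
    simp only [nsq_aux, Complex.sub_re, Complex.sub_im, Complex.mul_re, Complex.mul_im,
      Complex.one_re, Complex.one_im, Complex.conj_re, Complex.conj_im]
    ring
  have hSq : ‖z^2 - w^2‖^2 = ‖z - w‖^2 * ‖z + w‖^2 := by
    rw [show z^2 - w^2 = (z-w)*(z+w) by ring, norm_mul, mul_pow]
  have hZW : ‖z * w‖^2 = ‖z‖^2 * ‖w‖^2 := by
    simp only [nsq_aux, Complex.mul_re, Complex.mul_im]; ring
  have hP : ‖z + w‖^2
      = 4 - (‖z - w‖^2 + 2*((1 - ‖z‖^2) * (1 - ‖w‖^2)) + 2*(1 - ‖z‖^2 * ‖w‖^2)) := by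
    simp only [nsq_aux, Complex.add_re, Complex.add_im, Complex.sub_re, Complex.sub_im]
    ring
  have hR : (z * (starRingEnd ℂ) w).re = (‖z‖^2 + ‖w‖^2 - ‖z - w‖^2)/2 := by
    simp only [nsq_aux, Complex.mul_re, Complex.sub_re, Complex.sub_im,
      Complex.conj_re, Complex.conj_im]
    ring
  have hBne : (0:ℝ) < ‖z - w‖^2 + (1 - ‖z‖^2) * (1 - ‖w‖^2) := by linarith
  have hq' : ‖(z - w) / (1 - z * (starRingEnd ℂ) w)‖^2
      = ‖z - w‖^2 / (‖z - w‖^2 + (1 - ‖z‖^2) * (1 - ‖w‖^2)) := by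
    rw [norm_div, div_pow, hB]
  have hGamma : Gamma1 z w
      = (‖z - w‖^2*(‖z - w‖^2+2*((1 - ‖z‖^2) * (1 - ‖w‖^2))+2*(1 - ‖z‖^2 * ‖w‖^2))/4)
          * Real.log (‖z - w‖^2/(‖z - w‖^2+(1 - ‖z‖^2) * (1 - ‖w‖^2)))
        + ((1 - ‖z‖^2) * (1 - ‖w‖^2)/8)
          * (2*(‖z - w‖^2+2*((1 - ‖z‖^2) * (1 - ‖w‖^2))+2*(1 - ‖z‖^2 * ‖w‖^2))
            - (1 - ‖z‖^2) * (1 - ‖w‖^2)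
            - 2*((1 - ‖z‖^2) * (1 - ‖w‖^2))*(1 - ‖z‖^2 * ‖w‖^2)
                / (‖z - w‖^2+(1 - ‖z‖^2) * (1 - ‖w‖^2))) := by
    rw [Gamma1, hq', hSq, hZW, hB, hP, hR]
    ring
  obtain ⟨hlo, hhi⟩ := key_ineq_aux (‖z - w‖^2) ((1 - ‖z‖^2) * (1 - ‖w‖^2))
    (1 - ‖z‖^2 * ‖w‖^2) hA hS hM
  constructor
  · rw [hGamma, hB]
    calc (1 / 8) * ((1 - ‖z‖ ^ 2) ^ 3 * (1 - ‖w‖ ^ 2) ^ 3) /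
          (‖z - w‖^2 + (1 - ‖z‖^2) * (1 - ‖w‖^2))
        = ((1 - ‖z‖^2) * (1 - ‖w‖^2))^3 / (8*(‖z - w‖^2 + (1 - ‖z‖^2) * (1 - ‖w‖^2))) := by
          rw [div_eq_div_iff (by positivity) (by positivity)]; ring
      _ ≤ _ := by linarith [hlo]
  · rw [hGamma]
    have h4 : ‖1 - z * (starRingEnd ℂ) w‖^4 = (‖1 - z * (starRingEnd ℂ) w‖^2)^2 := by ring
    calc _ ≤ ((1 - ‖z‖^2) * (1 - ‖w‖^2))^3 *
          ((‖z - w‖^2 + (1 - ‖z‖^2) * (1 - ‖w‖^2)) +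
            (‖z - w‖^2+2*((1 - ‖z‖^2) * (1 - ‖w‖^2))+2*(1 - ‖z‖^2 * ‖w‖^2))) /
          (8*(‖z - w‖^2 + (1 - ‖z‖^2) * (1 - ‖w‖^2))^2) := by linarith [hhi]
      _ = (1 / 8) * ((1 - ‖z‖ ^ 2) ^ 3 * (1 - ‖w‖ ^ 2) ^ 3 /
            ‖1 - z * (starRingEnd ℂ) w‖ ^ 4) *
          (‖1 - z * (starRingEnd ℂ) w‖ ^ 2 + 4 - ‖z + w‖ ^ 2) := by
          rw [h4, hB, hP]
          field_simp
          ring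

end
end

section
/- Fix λ ∈ D and θ ∈ (−2,∞). The function z ↦ 1 + (θ/2)·(1−|λ|²)/(1−conj(λ)z) has a zero in D if and only if −2 < θ < −2/(1+|λ|). -/
open Complex MeasureTheory Metric Set

noncomputable section

/-- the kernel z ↦ 1 + (θ/2)(1-|λ|²)/(1-conj(λ)z) has a zero in 𝔻
iff -2 < θ < -2/(1+|λ|). -/
theorem statement13 (lam : ℂ) (hlam : lam ∈ unitDisk) (θ : ℝ) (hθ : -2 < θ) :
    (∃ z ∈ unitDisk,
        1 + ((θ / 2 : ℝ) : ℂ) * (((1 - ‖lam‖ ^ 2 : ℝ)) : ℂ) /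
            (1 - (starRingEnd ℂ) lam * z) = 0) ↔
      (-2 < θ ∧ θ < -2 / (1 + ‖lam‖)) := by
  have ht1 : ‖lam‖ < 1 := by simpa [unitDisk, mem_ball_zero_iff] using hlam
  set t := ‖lam‖ with htdef
  clear_value t
  have ht0 : 0 ≤ t := htdef ▸ norm_nonneg lam
  constructor
  · rintro ⟨z, hz, heq⟩
    refine ⟨hθ, ?_⟩
    rw [lt_div_iff₀ (by linarith : (0:ℝ) < 1 + t)]
    have hz1 : ‖z‖ < 1 := by simpa [unitDisk, mem_ball_zero_iff] using hz
    have hd0 : (1 - (starRingEnd ℂ) lam * z) ≠ 0 := by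
      intro h
      rw [h, div_zero, add_zero] at heq
      exact one_ne_zero heq
    have hkey : (starRingEnd ℂ) lam * z = ((1 + θ/2*(1 - t^2) : ℝ) : ℂ) := by
      have h2 := heq
      field_simp at h2
      push_cast at h2 ⊢
      linear_combination -h2
    have hnorm : |1 + θ/2*(1 - t^2)| = t * ‖z‖ := by
      have h3 := congrArg norm hkey
      rw [norm_mul, RCLike.norm_conj, Complex.norm_real, Real.norm_eq_abs, ← htdef] at h3
      exact h3.symm
    rcases eq_or_lt_of_le ht0 with h0 | h0
    · exfalso
      rw [← h0, zero_mul, abs_eq_zero] at hnorm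
      norm_num at hnorm
      linarith
    · have habs : |1 + θ/2*(1-t^2)| < t := by
        rw [hnorm]
        calc t * ‖z‖ < t * 1 := by exact mul_lt_mul_of_pos_left hz1 h0
        _ = t := mul_one t
      have hc := (abs_lt.mp habs).2
      nlinarith [show (0:ℝ) < 1 - t by linarith]
  · rintro ⟨hθ2, hlt⟩
    have hT : θ * (1 + t) < -2 := by
      rwa [lt_div_iff₀ (by linarith : (0:ℝ) < 1 + t)] at hlt
    have htpos : 0 < t := by nlinarith [mul_nonneg (by linarith : (0:ℝ) ≤ θ + 2) ht0]
    have hlam0 : lam ≠ 0 := norm_pos_iff.mp (htdef ▸ htpos)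
    have hconj0 : (starRingEnd ℂ) lam ≠ 0 := by
      simpa using hlam0
    have hct : 1 + θ/2 * (1 - t^2) < t := by
      nlinarith [mul_pos (show (0:ℝ) < 1 - t by linarith)
        (show (0:ℝ) < -(θ*(1+t)) - 2 by linarith)]
    have hct' : -t < 1 + θ/2 * (1 - t^2) := by
      nlinarith [mul_pos (show (0:ℝ) < 1 + t by linarith)
        (show (0:ℝ) < 2 + θ*(1-t) by
          nlinarith [mul_pos (show (0:ℝ) < θ + 2 by linarith) (show (0:ℝ) < 1 - t by linarith)])]
    refine ⟨((1 + θ/2 * (1 - t^2) : ℝ):ℂ) / (starRingEnd ℂ) lam, ?_, ?_⟩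
    · show _ ∈ Metric.ball (0:ℂ) 1
      rw [mem_ball_zero_iff, norm_div]
      rw [Complex.norm_real, Real.norm_eq_abs, RCLike.norm_conj, ← htdef, div_lt_one htpos]
      exact abs_lt.mpr ⟨hct', hct⟩
    · have hmul : (starRingEnd ℂ) lam *
          (((1 + θ/2 * (1 - t^2) : ℝ):ℂ)/(starRingEnd ℂ) lam) = ((1 + θ/2 * (1 - t^2) : ℝ):ℂ) :=
        mul_div_cancel₀ _ hconj0
      rw [hmul]
      have hθ0 : θ ≠ 0 := by intro h; rw [h] at hT; norm_num at hT
      have hX : ((θ/2:ℝ):ℂ) * ((1 - t^2:ℝ):ℂ) ≠ 0 := by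
        refine mul_ne_zero ?_ ?_
        · simpa using (by positivity : θ/2 ≠ 0)
        · simp only [ne_eq, Complex.ofReal_eq_zero]
          nlinarith
      have h1c : (1:ℂ) - ((1 + θ/2 * (1 - t^2) : ℝ):ℂ) = -(((θ/2:ℝ):ℂ) * ((1 - t^2:ℝ):ℂ)) := by
        push_cast; ring
      rw [h1c, div_neg, div_self hX]
      ring


end
end

section
/- Fix α with −1 < α < ∞, let A = {a₁,…,a_n} be a finite set of (not necessarily distinct) points of D with Blaschke product B_A(z) = ∏_k (z−a_k)/(1−conj(a_k)z), and let ω_{α,A}(z) = (α+1)(1−|z|²)^α |B_A(z)|². Suppose K′ : D × D → ℂ is such that for each w ∈ D, K′(·,w) reproduces at w for the weight ω_{α,A}. Then for each w ∈ D the function z ↦ B_A(z)·conj(B_A(w))·K′(z,w) belongs to the zero-based invariant subspace I_A = {f ∈ A²_α(D) : f vanishes on A counting multiplicities}, and for every f ∈ I_A, ∫_D f(z)·conj(B_A(z)·conj(B_A(w))·K′(z,w))·(α+1)(1−|z|²)^α dΣ(z) = f(w). -/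
open Complex MeasureTheory Metric Set

noncomputable section

section Aux

open Filter Function FormalMultilinearSeries
open scoped Topology

/-- Iterated derivative from power series coefficients. -/
lemma aux_iteratedDeriv_eq_factorial_smul_coeff {f : ℂ → ℂ} {c : ℂ}
    {p : FormalMultilinearSeries ℂ ℂ ℂ} (hp : HasFPowerSeriesAt f p c) (n : ℕ) :
    iteratedDeriv n f c = Nat.factorial n • p.coeff n := by
  obtain ⟨r, hr⟩ := hp
  rw [iteratedDeriv_eq_iteratedFDeriv, FormalMultilinearSeries.coeff,
    ← hr.factorial_smul (y := (1 : ℂ)) n]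
  rfl

lemma aux_coeff_eq_zero_of_iteratedDeriv {f : ℂ → ℂ} {c : ℂ}
    {p : FormalMultilinearSeries ℂ ℂ ℂ} (hp : HasFPowerSeriesAt f p c) {n : ℕ}
    (h : iteratedDeriv n f c = 0) : p.coeff n = 0 := by
  have h2 := aux_iteratedDeriv_eq_factorial_smul_coeff hp n
  rw [h, nsmul_eq_mul] at h2
  have hfac : ((Nat.factorial n : ℂ)) ≠ 0 := by
    exact_mod_cast Nat.cast_ne_zero.mpr (Nat.factorial_ne_zero n)
  rcases mul_eq_zero.mp h2.symm with h' | h'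
  · exact absurd h' hfac
  · exact h'

lemma aux_analyticAt_deriv {G : ℂ → ℂ} {c : ℂ} (hG : AnalyticAt ℂ G c) :
    AnalyticAt ℂ (deriv G) c := by
  obtain ⟨s, hs, hsa⟩ := hG.eventually_analyticAt.exists_mem
  exact AnalyticOnNhd.deriv (fun y hy => hsa y hy) c (mem_of_mem_nhds hs)

/-- If F = (z-c)^m * G near c with G analytic, then derivatives of F of order < m vanish. -/
lemma aux_iteratedDeriv_eq_zero_of_factor {c : ℂ} (j : ℕ) :
    ∀ {m : ℕ} {F G : ℂ → ℂ}, AnalyticAt ℂ G c → j < m →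
    (∀ᶠ z in 𝓝 c, F z = (z - c) ^ m * G z) → iteratedDeriv j F c = 0 := by
  induction j with
  | zero =>
    intro m F G hG hj hFG
    have h0 := hFG.self_of_nhds
    simp only [iteratedDeriv_zero, h0, sub_self]
    rw [zero_pow (by omega), zero_mul]
  | succ j ih =>
    intro m F G hG hj hFG
    obtain ⟨m', rfl⟩ : ∃ m', m = m' + 1 := ⟨m - 1, by omega⟩
    rw [iteratedDeriv_succ']
    set G₁ : ℂ → ℂ := fun z => ((m' : ℂ) + 1) * G z + (z - c) * deriv G z with hG₁
    have hG₁a : AnalyticAt ℂ G₁ c :=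
      (analyticAt_const.mul hG).add ((analyticAt_id.sub analyticAt_const).mul
        (aux_analyticAt_deriv hG))
    refine ih (m := m') hG₁a (by omega) ?_
    have hder : deriv F =ᶠ[𝓝 c] deriv (fun z => (z - c) ^ (m' + 1) * G z) :=
      Filter.EventuallyEq.deriv hFG
    filter_upwards [hder, hG.eventually_analyticAt] with z h1 h2
    rw [h1]
    have hd1 : DifferentiableAt ℂ (fun z : ℂ => (z - c) ^ (m' + 1)) z :=
      ((differentiableAt_id.sub (differentiableAt_const c)).pow _)
    have hd2 : DifferentiableAt ℂ G z := h2.differentiableAt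
    rw [deriv_fun_mul hd1 hd2]
    have hpd : HasDerivAt (fun z : ℂ => (z - c) ^ (m' + 1))
        (((m' + 1 : ℕ) : ℂ) * (z - c) ^ m') z := by
      simpa [Function.comp_def] using ((hasDerivAt_pow (m' + 1) (z - c)).comp z ((hasDerivAt_id z).sub_const c))
    rw [hpd.deriv, hG₁]
    push_cast
    ring

/-- Local factorization given vanishing of the first m derivatives. -/
lemma aux_exists_analyticAt_factor {f : ℂ → ℂ} {c : ℂ} (hf : AnalyticAt ℂ f c) (m : ℕ)
    (hd : ∀ j < m, iteratedDeriv j f c = 0) :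
    ∃ g : ℂ → ℂ, AnalyticAt ℂ g c ∧ ∀ᶠ z in 𝓝 c, f z = (z - c) ^ m * g z := by
  obtain ⟨p, hp⟩ := hf
  refine ⟨(swap dslope c)^[m] f,
    ⟨_, hp.has_fpower_series_iterate_dslope_fslope m⟩, ?_⟩
  have hcoeff : ∀ j < m, p.coeff j = 0 := fun j hj =>
    aux_coeff_eq_zero_of_iteratedDeriv hp (hd j hj)
  have hq := hasFPowerSeriesAt_iff'.mp (hp.has_fpower_series_iterate_dslope_fslope m)
  filter_upwards [hq, hasFPowerSeriesAt_iff'.mp hp] with x hx1 hx2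
  obtain ⟨s, hs1, hs2⟩ := HasSum.exists_hasSum_smul_of_apply_eq_zero hx2 hcoeff
  simp only [coeff_iterate_fslope] at hx1
  have hxs : (swap dslope c)^[m] f x = s := hx1.unique hs2
  rw [hxs, ← hs1, smul_eq_mul]

lemma aux_card_filter_succ {n : ℕ} (a : Fin (n + 1) → ℂ) (c : ℂ) :
    (Finset.univ.filter fun i : Fin (n + 1) => a i = c).card
      = (if a 0 = c then 1 else 0)
        + (Finset.univ.filter fun i : Fin n => a i.succ = c).card := by
  classical
  rw [Finset.card_filter, Finset.card_filter, Fin.sum_univ_succ]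

/-- Global division of a holomorphic function by a monic polynomial whose roots (with
multiplicity) are zeros of the function. -/
lemma aux_global_div {U : Set ℂ} (hU : IsOpen U) :
    ∀ (n : ℕ) (a : Fin n → ℂ), (∀ k, a k ∈ U) → ∀ {f : ℂ → ℂ}, DifferentiableOn ℂ f U →
    (∀ k, ∀ j < (Finset.univ.filter fun i => a i = a k).card, iteratedDeriv j f (a k) = 0) →
    ∃ g : ℂ → ℂ, DifferentiableOn ℂ g U ∧ ∀ z ∈ U, f z = (∏ k, (z - a k)) * g z := by
  intro n
  induction n with
  | zero =>
    intro a ha f hf hv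
    exact ⟨f, hf, fun z hz => by simp⟩
  | succ n ih =>
    intro a ha f hf hv
    classical
    set b := a 0 with hbdef
    have hb0 : f b = 0 := by
      have hmem : (0 : Fin (n + 1)) ∈ Finset.univ.filter (fun i => a i = a 0) := by simp
      have := hv 0 0 (Finset.card_pos.mpr ⟨0, hmem⟩)
      simpa using this
    set f₁ := dslope f b with hf₁def
    have hf₁ : DifferentiableOn ℂ f₁ U :=
      (Complex.differentiableOn_dslope (hU.mem_nhds (ha 0))).mpr hf
    have hfact : ∀ z : ℂ, f z = (z - b) * f₁ z := by
      intro z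
      by_cases hz : z = b
      · simp [hz, hb0]
      · rw [hf₁def, dslope_of_ne f hz, slope, hb0, vsub_eq_sub, sub_zero, smul_eq_mul]
        field_simp [sub_ne_zero.mpr hz]
    have hv₁ : ∀ k : Fin n,
        ∀ j < (Finset.univ.filter fun i : Fin n => a i.succ = a k.succ).card,
        iteratedDeriv j f₁ (a k.succ) = 0 := by
      intro k j hj
      set c := a k.succ with hc
      have hcard := aux_card_filter_succ a c
      have hvc : ∀ j' < (Finset.univ.filter fun i : Fin (n + 1) => a i = c).card,
          iteratedDeriv j' f c = 0 := hv k.succ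
      have hfc : AnalyticAt ℂ f c := hf.analyticAt (hU.mem_nhds (ha k.succ))
      by_cases hbc : b = c
      · obtain ⟨p, hp⟩ := hfc
        have hp' : HasFPowerSeriesAt (dslope f c) p.fslope c :=
          hp.has_fpower_series_dslope_fslope
        have hf₁c : f₁ = dslope f c := by rw [hf₁def, hbc]
        rw [hf₁c, aux_iteratedDeriv_eq_factorial_smul_coeff hp' j,
          FormalMultilinearSeries.coeff_fslope]
        have hd : iteratedDeriv (j + 1) f c = 0 := by
          apply hvc
          rw [hcard, if_pos (hbdef ▸ hbc)]
          omega
        rw [aux_coeff_eq_zero_of_iteratedDeriv hp hd, smul_zero]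
      · set m := (Finset.univ.filter fun i : Fin (n + 1) => a i = c).card with hm
        obtain ⟨g, hg, hfg⟩ := aux_exists_analyticAt_factor hfc m hvc
        refine aux_iteratedDeriv_eq_zero_of_factor j (m := m)
          (G := fun z => (z - b)⁻¹ * g z)
          (((analyticAt_id.sub analyticAt_const).inv
            (sub_ne_zero.mpr (Ne.symm hbc))).mul hg) ?_ ?_
        · rw [hcard, if_neg (fun h => hbc (hbdef ▸ h))] at hm
          omega
        · filter_upwards [hfg, eventually_ne_nhds (Ne.symm hbc)] with z h1 h2
          rw [hf₁def, dslope_of_ne f h2, slope, hb0, vsub_eq_sub, sub_zero, smul_eq_mul, h1]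
          field_simp
          try ring
    obtain ⟨g, hg, hfg⟩ := ih (fun k => a k.succ) (fun k => ha k.succ) hf₁ hv₁
    refine ⟨g, hg, fun z hz => ?_⟩
    rw [Fin.prod_univ_succ, hfact z, hfg z hz]
    ring

end Aux

/-- if K′(·,w) reproduces at w for the weight
ω_{α,A}(z) = (α+1)(1-|z|²)^α|B_A(z)|², then B_A(z)·conj(B_A(w))·K′(z,w) belongs to
the zero-based invariant subspace I_A of A²_α and reproduces every f ∈ I_A at w. -/
theorem statement16 (α : ℝ) (hα : -1 < α) (n : ℕ) (a : Fin n → ℂ)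
    (ha : ∀ k, a k ∈ unitDisk) (B : ℂ → ℂ)
    (hB : ∀ z : ℂ, B z = ∏ k, (z - a k) / (1 - (starRingEnd ℂ) (a k) * z))
    (K' : ℂ → ℂ → ℂ)
    (hK' : ∀ w ∈ unitDisk,
      Reproduces (fun z => (α + 1) * (1 - ‖z‖ ^ 2) ^ α * ‖B z‖ ^ 2)
        (fun z => K' z w) w) :
    ∀ w ∈ unitDisk,
      MemA2 (fun z => (α + 1) * (1 - ‖z‖ ^ 2) ^ α)
        (fun z => B z * (starRingEnd ℂ) (B w) * K' z w) ∧
      (∀ k : Fin n,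
        ∀ j < (Finset.univ.filter fun i => a i = a k).card,
          iteratedDeriv j (fun z => B z * (starRingEnd ℂ) (B w) * K' z w) (a k) = 0) ∧
      ∀ f : ℂ → ℂ, MemA2 (fun z => (α + 1) * (1 - ‖z‖ ^ 2) ^ α) f →
        (∀ k : Fin n,
          ∀ j < (Finset.univ.filter fun i => a i = a k).card,
            iteratedDeriv j f (a k) = 0) →
        ∫ z in unitDisk,
            f z * (starRingEnd ℂ) (B z * (starRingEnd ℂ) (B w) * K' z w) *
              (((α + 1) * (1 - ‖z‖ ^ 2) ^ α : ℝ) : ℂ) ∂dSigma = f w := by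
  classical
  intro w hw
  have hdisk_open : IsOpen unitDisk := isOpen_ball
  have hdisk_meas : MeasurableSet unitDisk := hdisk_open.measurableSet
  obtain ⟨⟨hK'diff, hK'int⟩, hK'rep⟩ := hK' w hw
  set P : ℂ → ℂ := fun z => ∏ k, (z - a k) with hP
  set Q : ℂ → ℂ := fun z => ∏ k, (1 - (starRingEnd ℂ) (a k) * z) with hQdef
  have hBPQ : ∀ z, B z = P z / Q z := by
    intro z
    rw [hB, hP, hQdef, Finset.prod_div_distrib]
  have hQ : ∀ z ∈ unitDisk, Q z ≠ 0 := by
    intro z hz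
    rw [hQdef]
    rw [Finset.prod_ne_zero_iff]
    intro k _
    intro h
    have h1 : (1 : ℂ) = (starRingEnd ℂ) (a k) * z := by
      have := sub_eq_zero.mp h; exact this
    have h2 : (1 : ℝ) = ‖(starRingEnd ℂ) (a k) * z‖ := by
      rw [← h1]; simp
    rw [norm_mul, RCLike.norm_conj] at h2
    have hak : ‖a k‖ < 1 := by simpa [unitDisk, mem_ball_zero_iff] using ha k
    have hz1 : ‖z‖ < 1 := by simpa [unitDisk, mem_ball_zero_iff] using hz
    nlinarith [norm_nonneg (a k), norm_nonneg z]
  have hPdiff : Differentiable ℂ P := by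
    rw [hP]
    exact Differentiable.fun_finset_prod
      (fun i _ => (differentiable_id.sub (differentiable_const (a i))))
  have hQdiff : Differentiable ℂ Q := by
    rw [hQdef]
    exact Differentiable.fun_finset_prod
      (fun i _ => (differentiable_const (1 : ℂ)).sub (differentiable_id.const_mul _))
  have hBdiff : DifferentiableOn ℂ B unitDisk := by
    refine DifferentiableOn.congr
      ((hPdiff.differentiableOn).div (hQdiff.differentiableOn) hQ) ?_
    intro z hz; exact hBPQ z
  have cBw := (starRingEnd ℂ) (B w)
  -- Part 1: membership in A²_α
  have part1 : MemA2 (fun z => (α + 1) * (1 - ‖z‖ ^ 2) ^ α)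
      (fun z => B z * (starRingEnd ℂ) (B w) * K' z w) := by
    constructor
    · exact (hBdiff.mul_const _).mul hK'diff
    · refine (hK'int.const_mul (‖B w‖ ^ 2)).congr ?_
      refine Filter.Eventually.of_forall (fun z => ?_)
      simp only [norm_mul, RCLike.norm_conj]
      ring
  refine ⟨part1, ?_, ?_⟩
  -- Part 2: vanishing at the points of A with multiplicity
  · intro k j hj
    set m := (Finset.univ.filter fun i => a i = a k).card with hm
    have hPfac : ∀ z, P z = (z - a k) ^ m *
        ∏ i ∈ Finset.univ.filter (fun i => ¬(a i = a k)), (z - a i) := by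
      intro z
      have hconst : ∏ i ∈ Finset.univ.filter (fun i => a i = a k), (z - a i)
          = (z - a k) ^ m := by
        rw [hm, ← Finset.prod_const]
        exact Finset.prod_congr rfl (fun i hi => by rw [(Finset.mem_filter.mp hi).2])
      simp only [hP]
      rw [← Finset.prod_filter_mul_prod_filter_not Finset.univ (fun i => a i = a k), hconst]
    set H : ℂ → ℂ := fun z =>
      ((∏ i ∈ Finset.univ.filter (fun i => ¬(a i = a k)), (z - a i)) / Q z)
        * ((starRingEnd ℂ) (B w) * K' z w) with hH
    have hHdiff : DifferentiableOn ℂ H unitDisk := by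
      refine DifferentiableOn.mul ?_ ((differentiableOn_const _).mul hK'diff)
      exact ((Differentiable.fun_finset_prod
        (fun i _ => (differentiable_id.sub (differentiable_const (a i))))).differentiableOn).div
        (hQdiff.differentiableOn) hQ
    have hHan : AnalyticAt ℂ H (a k) := hHdiff.analyticAt (hdisk_open.mem_nhds (ha k))
    refine aux_iteratedDeriv_eq_zero_of_factor j hHan hj ?_
    refine Filter.eventually_of_mem (hdisk_open.mem_nhds (ha k)) (fun z hz => ?_)
    rw [hBPQ z, hPfac z, hH]
    field_simp [hQ z hz]
  -- Part 3: the reproducing property on I_A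
  · intro f hf hvf
    obtain ⟨g, hgdiff, hfg⟩ := aux_global_div hdisk_open n a ha hf.1 hvf
    set G : ℂ → ℂ := fun z => g z * Q z with hG
    have hGdiff : DifferentiableOn ℂ G unitDisk := hgdiff.mul (hQdiff.differentiableOn)
    have hGB : ∀ z ∈ unitDisk, G z * B z = f z := by
      intro z hz
      rw [hG, hBPQ z, hfg z hz]
      field_simp [hQ z hz]
      ring
    have hGmem : MemA2 (fun z => (α + 1) * (1 - ‖z‖ ^ 2) ^ α * ‖B z‖ ^ 2) G := by
      refine ⟨hGdiff, ?_⟩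
      refine (hf.2).congr_fun (fun z hz => ?_) hdisk_meas
      beta_reduce
      rw [← hGB z hz]
      simp only [norm_mul]
      ring
    have hrep := hK'rep G hGmem
    have heq : ∀ z ∈ unitDisk,
        f z * (starRingEnd ℂ) (B z * (starRingEnd ℂ) (B w) * K' z w) *
          (((α + 1) * (1 - ‖z‖ ^ 2) ^ α : ℝ) : ℂ)
        = B w * (G z * (starRingEnd ℂ) (K' z w) *
            (((α + 1) * (1 - ‖z‖ ^ 2) ^ α * ‖B z‖ ^ 2 : ℝ) : ℂ)) := by
      intro z hz
      rw [← hGB z hz]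
      have hBconj : B z * (starRingEnd ℂ) (B z) = ((‖B z‖ ^ 2 : ℝ) : ℂ) := by
        rw [Complex.mul_conj]
        norm_cast
        rw [Complex.normSq_eq_norm_sq]
      simp only [map_mul, Complex.conj_conj]
      push_cast
      rw [show ((‖B z‖ : ℂ)) ^ 2 = B z * (starRingEnd ℂ) (B z) by
        rw [hBconj]; push_cast; ring]
      ring
    rw [MeasureTheory.setIntegral_congr_fun hdisk_meas heq,
      MeasureTheory.integral_const_mul, hrep, mul_comm]
    exact hGB w hw

end
end

section
/- Let ω₀ be a positive continuous function on D, integrable with respect to dΣ, with ∫_D ω₀ dΣ = 1. Suppose that for every real-valued bounded harmonic function h on D with h(0) = 0 and every real t, ∫_D ω₀ dΣ ≤ ∫_D e^{t·h(z)} ω₀(z) dΣ(z). Then ω₀ has the mean value property: ∫_D h(z) ω₀(z) dΣ(z) = h(0) for every bounded harmonic function h on D. -/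
open Complex MeasureTheory Metric Set Filter
open scoped Topology

noncomputable section

lemma isOpen_unitDisk : IsOpen unitDisk := isOpen_ball
lemma measurableSet_unitDisk : MeasurableSet unitDisk := measurableSet_ball
lemma zero_mem_unitDisk : (0:ℂ) ∈ unitDisk := mem_ball_self one_pos

lemma abs_exp_sub_one_le' (x : ℝ) : |Real.exp x - 1| ≤ |x| * Real.exp |x| := by
  rcases le_or_gt 0 x with hx | hx
  · rw [_root_.abs_of_nonneg hx, _root_.abs_of_nonneg (by linarith [Real.one_le_exp hx])]
    have h1 : 1 - x ≤ Real.exp (-x) := by linarith [Real.add_one_le_exp (-x)]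
    have h2 : Real.exp (-x) * Real.exp x = 1 := by rw [← Real.exp_add]; simp
    have h3 : (0:ℝ) < Real.exp x := Real.exp_pos x
    nlinarith
  · rw [_root_.abs_of_neg hx, _root_.abs_of_nonpos (by linarith [Real.exp_lt_one_iff.2 hx] : Real.exp x - 1 ≤ 0)]
    have h1 : x + 1 ≤ Real.exp x := Real.add_one_le_exp x
    have h2 : (1:ℝ) ≤ Real.exp (-x) := Real.one_le_exp (by linarith)
    nlinarith

lemma second_deriv_comp (L : ℂ →L[ℝ] ℝ) (h : ℂ → ℂ)
    (hh : ContDiffOn ℝ 2 h unitDisk) (z : ℂ) (hz : z ∈ unitDisk) (v : ℂ) :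
    fderiv ℝ (fun w => fderiv ℝ (fun w => L (h w)) w v) z v
      = L (fderiv ℝ (fun w => fderiv ℝ h w v) z v) := by
  have ho := isOpen_unitDisk
  have hdz : ∀ w ∈ unitDisk, DifferentiableAt ℝ h w := fun w hw =>
    (hh.differentiableOn (by norm_num)).differentiableAt (ho.mem_nhds hw)
  have hf' : ContDiffOn ℝ 1 (fun w => fderiv ℝ h w) unitDisk :=
    hh.fderiv_of_isOpen ho (by norm_num)
  have hdd : DifferentiableAt ℝ (fun w => fderiv ℝ h w) z :=
    (hf'.differentiableOn (by norm_num)).differentiableAt (ho.mem_nhds hz)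
  have e1 : (fun w => fderiv ℝ (fun w => L (h w)) w v) =ᶠ[𝓝 z]
      (fun w => L (fderiv ℝ h w v)) := by
    filter_upwards [ho.mem_nhds hz] with w hw
    have : fderiv ℝ (fun w => L (h w)) w = L.comp (fderiv ℝ h w) :=
      (L.hasFDerivAt.comp w (hdz w hw).hasFDerivAt).fderiv
    rw [this]; rfl
  rw [e1.fderiv_eq]
  -- now compute fderiv of w ↦ L (fderiv h w v)
  set Φ : (ℂ →L[ℝ] ℂ) →L[ℝ] ℝ := L.comp (ContinuousLinearMap.apply ℝ ℂ v) with hΦ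
  have h2 : fderiv ℝ (fun w => L (fderiv ℝ h w v)) z = Φ.comp (fderiv ℝ (fun w => fderiv ℝ h w) z) :=
    (Φ.hasFDerivAt.comp z hdd.hasFDerivAt).fderiv
  have h3 : fderiv ℝ (fun w => fderiv ℝ h w v) z =
      (ContinuousLinearMap.apply ℝ ℂ v).comp (fderiv ℝ (fun w => fderiv ℝ h w) z) :=
    ((ContinuousLinearMap.apply ℝ ℂ v).hasFDerivAt.comp z hdd.hasFDerivAt).fderiv
  rw [h2, h3]; rfl

lemma lapR_clm_comp (L : ℂ →L[ℝ] ℝ) (h : ℂ → ℂ)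
    (hh : ContDiffOn ℝ 2 h unitDisk) (z : ℂ) (hz : z ∈ unitDisk) :
    lapR (fun w => L (h w)) z = L (lapC h z) := by
  have e1 := second_deriv_comp L h hh z hz 1
  have e2 := second_deriv_comp L h hh z hz Complex.I
  have hsmul : (lapC h z) = ((1/4 : ℝ)) • (fderiv ℝ (fun w => fderiv ℝ h w 1) z 1
      + fderiv ℝ (fun w => fderiv ℝ h w Complex.I) z Complex.I) := by
    rw [lapC, Complex.real_smul]; norm_num
  rw [lapR, e1, e2, hsmul, _root_.map_smul, map_add]
  simp

lemma lapR_neg (u : ℂ → ℝ) (z : ℂ) : lapR (fun w => -(u w)) z = -(lapR u z) := by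
  have e : ∀ v : ℂ, (fun w => fderiv ℝ (fun x => -(u x)) w v) = fun w => -(fderiv ℝ u w v) := by
    intro v; funext w; rw [fderiv_fun_neg]; rfl
  rw [lapR, e 1, e Complex.I, fderiv_fun_neg, fderiv_fun_neg, lapR]
  simp; ring

lemma lapR_sub_const (u : ℂ → ℝ) (c : ℝ) (z : ℂ) :
    lapR (fun w => u w - c) z = lapR u z := by
  have e : ∀ v : ℂ, (fun w => fderiv ℝ (fun x => u x - c) w v) = fun w => fderiv ℝ u w v := by
    intro v; funext w; rw [fderiv_sub_const]
  rw [lapR, e 1, e Complex.I, lapR]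

lemma integral_nonneg_of_min (ω₀ : ℂ → ℝ)
    (hpos : ∀ z ∈ unitDisk, 0 < ω₀ z)
    (hcont : ContinuousOn ω₀ unitDisk)
    (hint : IntegrableOn ω₀ unitDisk dSigma)
    (hmass : (∫ z in unitDisk, ω₀ z ∂dSigma) = 1)
    (h : ℂ → ℝ) (hhc : ContinuousOn h unitDisk)
    (M : ℝ) (hM : ∀ z ∈ unitDisk, |h z| ≤ M)
    (hmin1 : ∀ t : ℝ, (∫ z in unitDisk, ω₀ z ∂dSigma) ≤
        ∫ z in unitDisk, Real.exp (t * h z) * ω₀ z ∂dSigma) :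
    0 ≤ ∫ z in unitDisk, h z * ω₀ z ∂dSigma := by
  set t : ℕ → ℝ := fun n => 1 / (n + 1) with htdef
  have ht0 : ∀ n, 0 < t n := fun n => by positivity
  have ht1 : ∀ n, t n ≤ 1 := fun n => by
    rw [htdef]; rw [div_le_one (by positivity)]; simp
  set F : ℕ → ℂ → ℝ := fun n z => (Real.exp (t n * h z) - 1) / t n * ω₀ z with hFdef
  have hM0 : 0 ≤ M := le_trans (abs_nonneg _) (hM 0 (mem_ball_self one_pos))
  -- integrability of exp(t h) ω₀
  have hEint : ∀ n, IntegrableOn (fun z => Real.exp (t n * h z) * ω₀ z) unitDisk dSigma := by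
    intro n
    have hcE : ContinuousOn (fun z => Real.exp (t n * h z) * ω₀ z) unitDisk :=
      (Real.continuous_exp.comp_continuousOn (continuousOn_const.mul hhc)).mul hcont
    refine Integrable.mono' (hint.const_mul (Real.exp M)) 
      (hcE.aestronglyMeasurable measurableSet_unitDisk) ?_
    refine (ae_restrict_iff' measurableSet_unitDisk).2 (Filter.Eventually.of_forall ?_)
    intro z hz
    have h1 : t n * h z ≤ M := by
      calc t n * h z ≤ |t n * h z| := le_abs_self _
        _ = t n * |h z| := by rw [abs_mul, _root_.abs_of_nonneg (ht0 n).le]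
        _ ≤ 1 * M := mul_le_mul (ht1 n) (hM z hz) (abs_nonneg _) zero_le_one
        _ = M := one_mul M
    have h2 : 0 ≤ ω₀ z := (hpos z hz).le
    rw [Real.norm_eq_abs, abs_mul, _root_.abs_of_nonneg (Real.exp_pos _).le,
      _root_.abs_of_nonneg h2]
    exact mul_le_mul_of_nonneg_right (Real.exp_le_exp.2 h1) h2
  -- each integral nonneg
  have hFnn : ∀ n, 0 ≤ ∫ z in unitDisk, F n z ∂dSigma := by
    intro n
    have heq : ∀ z, F n z = (Real.exp (t n * h z) * ω₀ z - ω₀ z) / t n := by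
      intro z; rw [hFdef]; ring
    have : (∫ z in unitDisk, F n z ∂dSigma)
        = ((∫ z in unitDisk, Real.exp (t n * h z) * ω₀ z ∂dSigma)
            - ∫ z in unitDisk, ω₀ z ∂dSigma) / t n := by
      simp only [heq]
      rw [integral_div, integral_sub (hEint n) hint]
    rw [this]
    have hge := hmin1 (t n)
    apply div_nonneg (by linarith) (ht0 n).le
  -- convergence
  have hFlim : Tendsto (fun n => ∫ z in unitDisk, F n z ∂dSigma) atTop
      (𝓝 (∫ z in unitDisk, h z * ω₀ z ∂dSigma)) := by
    refine tendsto_integral_filter_of_dominated_convergence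
      (fun z => (M * Real.exp M) * ω₀ z) ?_ ?_ ?_ ?_
    · refine Filter.Eventually.of_forall fun n => ?_
      have hcF : ContinuousOn (F n) unitDisk :=
        (((Real.continuous_exp.comp_continuousOn (continuousOn_const.mul hhc)).sub
          continuousOn_const).div_const _).mul hcont
      exact hcF.aestronglyMeasurable measurableSet_unitDisk
    · refine Filter.Eventually.of_forall fun n => ?_
      refine (ae_restrict_iff' measurableSet_unitDisk).2 (Filter.Eventually.of_forall ?_)
      intro z hz
      have h2 : 0 ≤ ω₀ z := (hpos z hz).le
      have hx : |t n * h z| ≤ t n * M := by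
        rw [abs_mul, _root_.abs_of_nonneg (ht0 n).le]
        exact mul_le_mul_of_nonneg_left (hM z hz) (ht0 n).le
      have hxM : |t n * h z| ≤ M := le_trans hx (by nlinarith [ht1 n, ht0 n])
      have key : |Real.exp (t n * h z) - 1| ≤ t n * (M * Real.exp M) := by
        calc |Real.exp (t n * h z) - 1| ≤ |t n * h z| * Real.exp |t n * h z| :=
              abs_exp_sub_one_le' _
          _ ≤ (t n * M) * Real.exp M := by
              have := Real.exp_le_exp.2 hxM
              exact mul_le_mul hx this (Real.exp_pos _).le (by positivity)
          _ = t n * (M * Real.exp M) := by ring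
      rw [Real.norm_eq_abs, hFdef]
      simp only
      rw [abs_mul, _root_.abs_of_nonneg h2, abs_div, _root_.abs_of_nonneg (ht0 n).le]
      have : |Real.exp (t n * h z) - 1| / t n ≤ M * Real.exp M := by
        rw [div_le_iff₀ (ht0 n)]; linarith [key]
      exact mul_le_mul_of_nonneg_right this h2
    · exact hint.const_mul _
    · refine Filter.Eventually.of_forall fun z => ?_
      have hd : HasDerivAt (fun s : ℝ => Real.exp (s * h z)) (h z) 0 := by
        have := (hasDerivAt_mul_const (h z) (x := (0:ℝ))).exp
        simpa using this
      have hslope := hasDerivAt_iff_tendsto_slope.1 hd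
      have htend : Tendsto t atTop (𝓝[≠] (0:ℝ)) := by
        refine tendsto_nhdsWithin_of_tendsto_nhds_of_eventually_within _ 
          tendsto_one_div_add_atTop_nhds_zero_nat
          (Filter.Eventually.of_forall fun n => (ht0 n).ne')
      have := (hslope.comp htend).mul_const (ω₀ z)
      convert this using 2 with n
      rw [hFdef]
      simp only [Function.comp_apply, slope_def_field]
      norm_num
  exact ge_of_tendsto' hFlim hFnn

/-- a positive continuous probability weight ω₀ on 𝔻 which minimizes
total mass within its variational family e^{th}ω₀ (h bounded harmonic, h(0) = 0)
has the mean value property for bounded harmonic functions. -/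
theorem statement17 (ω₀ : ℂ → ℝ)
    (hpos : ∀ z ∈ unitDisk, 0 < ω₀ z)
    (hcont : ContinuousOn ω₀ unitDisk)
    (hint : IntegrableOn ω₀ unitDisk dSigma)
    (hmass : (∫ z in unitDisk, ω₀ z ∂dSigma) = 1)
    (hmin : ∀ h : ℂ → ℝ, BoundedHarmonicR h → h 0 = 0 → ∀ t : ℝ,
      (∫ z in unitDisk, ω₀ z ∂dSigma) ≤
        ∫ z in unitDisk, Real.exp (t * h z) * ω₀ z ∂dSigma) :
    ∀ h : ℂ → ℂ, BoundedHarmonicC h →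
      ∫ z in unitDisk, h z * (ω₀ z : ℂ) ∂dSigma = h 0 := by
  intro h hb
  obtain ⟨hC2, hlap, M, hM⟩ := hb
  have hM0 : 0 ≤ M := le_trans (norm_nonneg _) (hM 0 zero_mem_unitDisk)
  -- integrability helper
  have hibd : ∀ g : ℂ → ℝ, ContinuousOn g unitDisk → (∀ z ∈ unitDisk, |g z| ≤ M) →
      IntegrableOn (fun z => g z * ω₀ z) unitDisk dSigma := by
    intro g hgc hgb
    refine Integrable.mono' (hint.const_mul M)
      ((hgc.mul hcont).aestronglyMeasurable measurableSet_unitDisk) ?_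
    refine (ae_restrict_iff' measurableSet_unitDisk).2 (Filter.Eventually.of_forall ?_)
    intro z hz
    rw [Real.norm_eq_abs, abs_mul, _root_.abs_of_nonneg (hpos z hz).le]
    exact mul_le_mul_of_nonneg_right (hgb z hz) (hpos z hz).le
  -- zero-integral for bounded harmonic vanishing at 0
  have hzero : ∀ u : ℂ → ℝ, BoundedHarmonicR u → u 0 = 0 →
      ∫ z in unitDisk, u z * ω₀ z ∂dSigma = 0 := by
    intro u hu hu0
    obtain ⟨huC, hulap, N, hN⟩ := hu
    have hneg : BoundedHarmonicR (fun z => -(u z)) := by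
      refine ⟨huC.neg, fun z hz => by rw [lapR_neg, hulap z hz, neg_zero], N, fun z hz => ?_⟩
      rw [abs_neg]; exact hN z hz
    have i1 := integral_nonneg_of_min ω₀ hpos hcont hint hmass u huC.continuousOn N hN
      (hmin u ⟨huC, hulap, N, hN⟩ hu0)
    have i2 := integral_nonneg_of_min ω₀ hpos hcont hint hmass (fun z => -(u z))
      huC.continuousOn.neg N (fun z hz => by rw [abs_neg]; exact hN z hz)
      (hmin _ hneg (by simp [hu0]))
    have e : (∫ z in unitDisk, -(u z) * ω₀ z ∂dSigma) = -∫ z in unitDisk, u z * ω₀ z ∂dSigma := by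
      simp only [neg_mul]; exact integral_neg _
    rw [e] at i2
    linarith
  -- mean value for real parts via a linear functional
  have claim : ∀ L : ℂ →L[ℝ] ℝ, (∀ w : ℂ, |L w| ≤ ‖w‖) →
      ∫ z in unitDisk, L (h z) * ω₀ z ∂dSigma = L (h 0) := by
    intro L hL
    set u : ℂ → ℝ := fun z => L (h z) - L (h 0) with hu
    have hLc : ContDiffOn ℝ 2 (fun z => L (h z)) unitDisk := L.contDiff.comp_contDiffOn hC2
    have huC : ContDiffOn ℝ 2 u unitDisk := hLc.sub contDiffOn_const
    have hulap : ∀ z ∈ unitDisk, lapR u z = 0 := by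
      intro z hz
      rw [hu]
      rw [show (fun z => L (h z) - L (h 0)) = fun z => (fun w => L (h w)) z - L (h 0) from rfl]
      rw [lapR_sub_const, lapR_clm_comp L h hC2 z hz, hlap z hz, map_zero]
    have hLb : ∀ z ∈ unitDisk, |L (h z)| ≤ M := fun z hz => le_trans (hL _) (hM z hz)
    have hubd : ∀ z ∈ unitDisk, |u z| ≤ M + |L (h 0)| := by
      intro z hz
      calc |u z| ≤ |L (h z)| + |L (h 0)| := abs_sub _ _
        _ ≤ M + |L (h 0)| := by linarith [hLb z hz]
    have hz0 := hzero u ⟨huC, hulap, M + |L (h 0)|, hubd⟩ (by simp [hu])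
    have hintL : IntegrableOn (fun z => L (h z) * ω₀ z) unitDisk dSigma :=
      hibd _ hLc.continuousOn hLb
    have hsplit : (∫ z in unitDisk, u z * ω₀ z ∂dSigma)
        = (∫ z in unitDisk, L (h z) * ω₀ z ∂dSigma) - L (h 0) * ∫ z in unitDisk, ω₀ z ∂dSigma := by
      rw [hu]
      simp only [sub_mul]
      rw [integral_sub hintL (hint.const_mul _), integral_const_mul]
    rw [hsplit, hmass] at hz0
    linarith
  have hre := claim Complex.reCLM (fun w => by
    simpa using Complex.abs_re_le_norm w)
  have him := claim Complex.imCLM (fun w => by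
    simpa using Complex.abs_im_le_norm w)
  simp only [Complex.reCLM_apply] at hre
  simp only [Complex.imCLM_apply] at him
  have hintRe : IntegrableOn (fun z => (h z).re * ω₀ z) unitDisk dSigma :=
    hibd _ (Complex.continuous_re.comp_continuousOn hC2.continuousOn)
      (fun z hz => le_trans (Complex.abs_re_le_norm _) (hM z hz))
  have hintIm : IntegrableOn (fun z => (h z).im * ω₀ z) unitDisk dSigma :=
    hibd _ (Complex.continuous_im.comp_continuousOn hC2.continuousOn)
      (fun z hz => le_trans (Complex.abs_im_le_norm _) (hM z hz))
  have hptw : ∀ z : ℂ, h z * (ω₀ z : ℂ)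
      = (((h z).re * ω₀ z : ℝ) : ℂ) + (((h z).im * ω₀ z : ℝ) : ℂ) * Complex.I := by
    intro z
    rw [← Complex.re_add_im (h z)]
    push_cast
    ring_nf
    simp [Complex.add_re, Complex.add_im, Complex.mul_I_re, Complex.mul_I_im]
    ring
  calc (∫ z in unitDisk, h z * (ω₀ z : ℂ) ∂dSigma)
      = ∫ z in unitDisk, ((((h z).re * ω₀ z : ℝ) : ℂ) + (((h z).im * ω₀ z : ℝ) : ℂ) * Complex.I) ∂dSigma := by
        simp only [hptw]
    _ = (∫ z in unitDisk, (((h z).re * ω₀ z : ℝ) : ℂ) ∂dSigma)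
        + ∫ z in unitDisk, ((((h z).im * ω₀ z : ℝ) : ℂ) * Complex.I) ∂dSigma := by
        exact integral_add hintRe.ofReal (hintIm.ofReal.mul_const _)
    _ = (((h 0).re : ℂ)) + ((h 0).im : ℂ) * Complex.I := by
        rw [integral_mul_const,
          show (∫ z in unitDisk, (((h z).re * ω₀ z : ℝ):ℂ) ∂dSigma)
            = (((∫ z in unitDisk, (h z).re * ω₀ z ∂dSigma : ℝ)):ℂ) from integral_ofReal,
          show (∫ z in unitDisk, (((h z).im * ω₀ z : ℝ):ℂ) ∂dSigma)
            = (((∫ z in unitDisk, (h z).im * ω₀ z ∂dSigma : ℝ)):ℂ) from integral_ofReal,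
          hre, him]
    _ = h 0 := Complex.re_add_im (h 0)


end
end

section
/- Let a, b, c be C^∞-smooth real-valued functions on D with a > 0, b > 0 and c² < a·b, and let L be the Laplace–Beltrami-type operator L f = ∂_x[ (b·∂_x f − c·∂_y f)/√(ab−c²) ] + ∂_y[ (−c·∂_x f + a·∂_y f)/√(ab−c²) ]. If L h = 0 on D for every (real-valued) harmonic function h on D, then a = b and c = 0 identically on D; that is, the Riemannian metric ds² = a dx² + b dy² + 2c dx dy is isothermal. -/
open Complex MeasureTheory Metric Set

noncomputable section

/-- The partial derivative ∂/∂x of a real-valued function on ℂ ≅ ℝ². -/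
def Px (f : ℂ → ℝ) (z : ℂ) : ℝ := fderiv ℝ f z 1

/-- The partial derivative ∂/∂y of a real-valued function on ℂ ≅ ℝ². -/
def Py (f : ℂ → ℝ) (z : ℂ) : ℝ := fderiv ℝ f z Complex.I

/-- The Laplace–Beltrami-type operator
L f = ∂ₓ[(b ∂ₓ f - c ∂_y f)/√(ab-c²)] + ∂_y[(-c ∂ₓ f + a ∂_y f)/√(ab-c²)]
of the metric ds² = a dx² + b dy² + 2c dx dy. -/
def LB (a b c : ℂ → ℝ) (f : ℂ → ℝ) (z : ℂ) : ℝ :=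
  Px (fun z => (b z * Px f z - c z * Py f z) / Real.sqrt (a z * b z - c z ^ 2)) z
    + Py (fun z => (-(c z) * Px f z + a z * Py f z) / Real.sqrt (a z * b z - c z ^ 2)) z

lemma fderiv_re' (w v : ℂ) : fderiv ℝ (fun z : ℂ => z.re) w v = v.re := by
  have h : (fun z : ℂ => z.re) = Complex.reCLM := rfl
  rw [h, ContinuousLinearMap.fderiv]; rfl

lemma fderiv_im' (w v : ℂ) : fderiv ℝ (fun z : ℂ => z.im) w v = v.im := by
  have h : (fun z : ℂ => z.im) = Complex.imCLM := rfl
  rw [h, ContinuousLinearMap.fderiv]; rfl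

lemma diff_re : Differentiable ℝ (fun z : ℂ => z.re) := Complex.reCLM.differentiable
lemma diff_im : Differentiable ℝ (fun z : ℂ => z.im) := Complex.imCLM.differentiable

-- harmonicity of test functions
lemma harm_re : ∀ z, lapR (fun z => z.re) z = 0 := by
  intro z
  have h1 : (fun w : ℂ => fderiv ℝ (fun z : ℂ => z.re) w 1) = fun _ => (1:ℝ) := by
    funext w; rw [fderiv_re']; simp
  have h2 : (fun w : ℂ => fderiv ℝ (fun z : ℂ => z.re) w Complex.I) = fun _ => (0:ℝ) := by
    funext w; rw [fderiv_re']; simp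
  simp [lapR, h1, h2]

lemma harm_im : ∀ z, lapR (fun z => z.im) z = 0 := by
  intro z
  have h1 : (fun w : ℂ => fderiv ℝ (fun z : ℂ => z.im) w 1) = fun _ => (0:ℝ) := by
    funext w; rw [fderiv_im']; simp
  have h2 : (fun w : ℂ => fderiv ℝ (fun z : ℂ => z.im) w Complex.I) = fun _ => (1:ℝ) := by
    funext w; rw [fderiv_im']; simp
  simp [lapR, h1, h2]

lemma fderiv_xy (w v : ℂ) : fderiv ℝ (fun z : ℂ => z.re * z.im) w v
    = v.re * w.im + w.re * v.im := by
  rw [fderiv_fun_mul (diff_re.differentiableAt) (diff_im.differentiableAt)]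
  simp [fderiv_re', fderiv_im']; ring

lemma harm_xy : ∀ z, lapR (fun z => z.re * z.im) z = 0 := by
  intro z
  have h1 : (fun w : ℂ => fderiv ℝ (fun z : ℂ => z.re * z.im) w 1) = fun w => w.im := by
    funext w; rw [fderiv_xy]; simp
  have h2 : (fun w : ℂ => fderiv ℝ (fun z : ℂ => z.re * z.im) w Complex.I) = fun w => w.re := by
    funext w; rw [fderiv_xy]; simp
  simp [lapR, h1, h2, fderiv_re', fderiv_im']

lemma fderiv_sq (w v : ℂ) : fderiv ℝ (fun z : ℂ => z.re * z.re - z.im * z.im) w v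
    = 2 * v.re * w.re - 2 * v.im * w.im := by
  rw [fderiv_fun_sub ((diff_re.differentiableAt).fun_mul (diff_re.differentiableAt))
      ((diff_im.differentiableAt).fun_mul (diff_im.differentiableAt))]
  rw [ContinuousLinearMap.sub_apply,
    fderiv_fun_mul (diff_re.differentiableAt) (diff_re.differentiableAt),
    fderiv_fun_mul (diff_im.differentiableAt) (diff_im.differentiableAt)]
  simp [fderiv_re', fderiv_im']; ring

lemma harm_sq : ∀ z, lapR (fun z => z.re * z.re - z.im * z.im) z = 0 := by
  intro z
  have h1 : (fun w : ℂ => fderiv ℝ (fun z : ℂ => z.re * z.re - z.im * z.im) w 1)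
      = fun w => 2 * w.re := by funext w; rw [fderiv_sq]; simp
  have h2 : (fun w : ℂ => fderiv ℝ (fun z : ℂ => z.re * z.re - z.im * z.im) w Complex.I)
      = fun w => -(2 * w.im) := by funext w; rw [fderiv_sq]; simp [Complex.I_re, Complex.I_im]
  have e1 : fderiv ℝ (fun w : ℂ => 2 * w.re) z 1 = 2 := by
    have : (fun w : ℂ => 2 * w.re) = fun w => (2:ℝ) * (fun z : ℂ => z.re) w := rfl
    rw [this, fderiv_const_mul diff_re.differentiableAt]
    simp [fderiv_re']
  have e2 : fderiv ℝ (fun w : ℂ => -(2 * w.im)) z Complex.I = -2 := by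
    rw [fderiv_fun_neg, ContinuousLinearMap.neg_apply,
      fderiv_const_mul diff_im.differentiableAt]
    simp [fderiv_im']
  simp only [lapR, h1, h2]
  rw [e1, e2]; norm_num

-- contdiff of test functions
lemma cd_re : ContDiffOn ℝ 2 (fun z : ℂ => z.re) unitDisk :=
  (Complex.reCLM.contDiff).contDiffOn
lemma cd_im : ContDiffOn ℝ 2 (fun z : ℂ => z.im) unitDisk :=
  (Complex.imCLM.contDiff).contDiffOn
lemma cd_xy : ContDiffOn ℝ 2 (fun z : ℂ => z.re * z.im) unitDisk :=
  ((Complex.reCLM.contDiff).mul (Complex.imCLM.contDiff)).contDiffOn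
lemma cd_sq : ContDiffOn ℝ 2 (fun z : ℂ => z.re * z.re - z.im * z.im) unitDisk :=
  (((Complex.reCLM.contDiff).mul (Complex.reCLM.contDiff)).sub
    ((Complex.imCLM.contDiff).mul (Complex.imCLM.contDiff))).contDiffOn

/-- if every harmonic function on 𝔻 is annihilated by the
Laplace–Beltrami-type operator of the metric a dx² + b dy² + 2c dx dy, then the
metric is isothermal: a = b and c = 0 on 𝔻. -/
theorem statement19 (a b c : ℂ → ℝ)
    (hasmooth : ContDiffOn ℝ (⊤ : ℕ∞) a unitDisk)
    (hbsmooth : ContDiffOn ℝ (⊤ : ℕ∞) b unitDisk)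
    (hcsmooth : ContDiffOn ℝ (⊤ : ℕ∞) c unitDisk)
    (hapos : ∀ z ∈ unitDisk, 0 < a z)
    (hbpos : ∀ z ∈ unitDisk, 0 < b z)
    (hc : ∀ z ∈ unitDisk, c z ^ 2 < a z * b z)
    (hL : ∀ h : ℂ → ℝ, ContDiffOn ℝ 2 h unitDisk → (∀ z ∈ unitDisk, lapR h z = 0) →
      ∀ z ∈ unitDisk, LB a b c h z = 0) :
    ∀ z ∈ unitDisk, a z = b z ∧ c z = 0 := by
  intro z₀ hz₀
  have hopen : IsOpen unitDisk := isOpen_ball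
  -- notation
  set s : ℂ → ℝ := fun z => Real.sqrt (a z * b z - c z ^ 2) with hs_def
  set F : ℂ → ℝ := fun z => b z / s z with hF_def
  set G : ℂ → ℝ := fun z => c z / s z with hG_def
  set H : ℂ → ℝ := fun z => a z / s z with hH_def
  -- positivity at z₀ & differentiability of F G H at all points of disk
  have key : ∀ z ∈ unitDisk, 0 < s z ∧ DifferentiableAt ℝ F z ∧ DifferentiableAt ℝ G z
      ∧ DifferentiableAt ℝ H z := by
    intro z hz
    have hnhds := hopen.mem_nhds hz
    have ha' : ContDiffAt ℝ (⊤ : ℕ∞) a z := hasmooth.contDiffAt hnhds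
    have hb' : ContDiffAt ℝ (⊤ : ℕ∞) b z := hbsmooth.contDiffAt hnhds
    have hc' : ContDiffAt ℝ (⊤ : ℕ∞) c z := hcsmooth.contDiffAt hnhds
    have hE : ContDiffAt ℝ (⊤ : ℕ∞) (fun z => a z * b z - c z ^ 2) z :=
      (ha'.mul hb').sub (hc'.pow 2)
    have hEpos : 0 < a z * b z - c z ^ 2 := sub_pos.mpr (hc z hz)
    have hsqrt : ContDiffAt ℝ (⊤ : ℕ∞) s z :=
      (Real.contDiffAt_sqrt (ne_of_gt hEpos)).comp z hE
    have hspos : 0 < s z := Real.sqrt_pos.mpr hEpos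
    exact ⟨hspos, ((hb'.div hsqrt (ne_of_gt hspos)).differentiableAt (by simp)),
      ((hc'.div hsqrt (ne_of_gt hspos)).differentiableAt (by simp)),
      ((ha'.div hsqrt (ne_of_gt hspos)).differentiableAt (by simp))⟩
  obtain ⟨hspos, hF', hG', hH'⟩ := key z₀ hz₀
  -- equation 1 : from h = re
  have eq1 : Px F z₀ - Py G z₀ = 0 := by
    have h0 := hL (fun z => z.re) cd_re (fun z _ => harm_re z) z₀ hz₀
    have r1 : (fun z => (b z * Px (fun z : ℂ => z.re) z - c z * Py (fun z : ℂ => z.re) z)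
        / Real.sqrt (a z * b z - c z ^ 2)) = F := by
      funext w; simp [Px, Py, fderiv_re', hF_def, hs_def]
    have r2 : (fun z => (-(c z) * Px (fun z : ℂ => z.re) z + a z * Py (fun z : ℂ => z.re) z)
        / Real.sqrt (a z * b z - c z ^ 2)) = fun z => -G z := by
      funext w; simp [Px, Py, fderiv_re', hG_def, hs_def, neg_div]
    rw [LB, r1, r2] at h0
    have : Py (fun z => -G z) z₀ = -Py G z₀ := by
      simp [Py, fderiv_neg]
    rw [this] at h0; linarith
  -- equation 2 : from h = im
  have eq2 : Py H z₀ - Px G z₀ = 0 := by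
    have h0 := hL (fun z => z.im) cd_im (fun z _ => harm_im z) z₀ hz₀
    have r1 : (fun z => (b z * Px (fun z : ℂ => z.im) z - c z * Py (fun z : ℂ => z.im) z)
        / Real.sqrt (a z * b z - c z ^ 2)) = fun z => -G z := by
      funext w; simp [Px, Py, fderiv_im', hG_def, hs_def, neg_div]
    have r2 : (fun z => (-(c z) * Px (fun z : ℂ => z.im) z + a z * Py (fun z : ℂ => z.im) z)
        / Real.sqrt (a z * b z - c z ^ 2)) = H := by
      funext w; simp [Px, Py, fderiv_im', hH_def, hs_def]
    rw [LB, r1, r2] at h0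
    have : Px (fun z => -G z) z₀ = -Px G z₀ := by
      simp [Px, fderiv_neg]
    rw [this] at h0; linarith
  -- equation 3 : from h = xy : gives c z₀ = 0
  have hczero : c z₀ = 0 := by
    have h0 := hL (fun z => z.re * z.im) cd_xy (fun z _ => harm_xy z) z₀ hz₀
    have r1 : (fun z => (b z * Px (fun z : ℂ => z.re * z.im) z
        - c z * Py (fun z : ℂ => z.re * z.im) z) / Real.sqrt (a z * b z - c z ^ 2))
        = fun z => F z * z.im - G z * z.re := by
      funext w
      simp only [Px, Py, fderiv_xy, hF_def, hG_def, hs_def]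
      simp; ring
    have r2 : (fun z => (-(c z) * Px (fun z : ℂ => z.re * z.im) z
        + a z * Py (fun z : ℂ => z.re * z.im) z) / Real.sqrt (a z * b z - c z ^ 2))
        = fun z => H z * z.re - G z * z.im := by
      funext w
      simp only [Px, Py, fderiv_xy, hH_def, hG_def, hs_def]
      simp; ring
    rw [LB, r1, r2] at h0
    have d1 : Px (fun z => F z * z.im - G z * z.re) z₀
        = Px F z₀ * z₀.im - (Px G z₀ * z₀.re + G z₀) := by
      simp only [Px]
      rw [fderiv_fun_sub (hF'.fun_mul diff_im.differentiableAt) (hG'.fun_mul diff_re.differentiableAt),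
        ContinuousLinearMap.sub_apply,
        fderiv_fun_mul hF' diff_im.differentiableAt, fderiv_fun_mul hG' diff_re.differentiableAt]
      simp [fderiv_re', fderiv_im']; ring
    have d2 : Py (fun z => H z * z.re - G z * z.im) z₀
        = Py H z₀ * z₀.re - (Py G z₀ * z₀.im + G z₀) := by
      simp only [Py]
      rw [fderiv_fun_sub (hH'.fun_mul diff_re.differentiableAt) (hG'.fun_mul diff_im.differentiableAt),
        ContinuousLinearMap.sub_apply,
        fderiv_fun_mul hH' diff_re.differentiableAt, fderiv_fun_mul hG' diff_im.differentiableAt]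
      simp [fderiv_re', fderiv_im']; ring
    rw [d1, d2] at h0
    have hG0 : G z₀ = 0 := by
      linear_combination (-(1:ℝ)/2) * h0 + (z₀.im/2) * eq1 + (z₀.re/2) * eq2
    have hdiv : c z₀ / s z₀ = 0 := hG0
    exact (div_eq_zero_iff.mp hdiv).resolve_right (ne_of_gt hspos)
  -- equation 4 : from h = x² - y² : gives a z₀ = b z₀
  have hab : a z₀ = b z₀ := by
    have h0 := hL (fun z => z.re * z.re - z.im * z.im) cd_sq (fun z _ => harm_sq z) z₀ hz₀
    have r1 : (fun z => (b z * Px (fun z : ℂ => z.re * z.re - z.im * z.im) z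
        - c z * Py (fun z : ℂ => z.re * z.re - z.im * z.im) z)
        / Real.sqrt (a z * b z - c z ^ 2))
        = fun z => 2 * (F z * z.re) + 2 * (G z * z.im) := by
      funext w
      simp only [Px, Py, fderiv_sq, hF_def, hG_def, hs_def]
      simp; ring
    have r2 : (fun z => (-(c z) * Px (fun z : ℂ => z.re * z.re - z.im * z.im) z
        + a z * Py (fun z : ℂ => z.re * z.re - z.im * z.im) z)
        / Real.sqrt (a z * b z - c z ^ 2))
        = fun z => -(2 * (G z * z.re)) - 2 * (H z * z.im) := by
      funext w
      simp only [Px, Py, fderiv_sq, hH_def, hG_def, hs_def]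
      simp; ring
    rw [LB, r1, r2] at h0
    have d1 : Px (fun z => 2 * (F z * z.re) + 2 * (G z * z.im)) z₀
        = 2 * (Px F z₀ * z₀.re + F z₀) + 2 * (Px G z₀ * z₀.im) := by
      simp only [Px]
      rw [fderiv_fun_add ((hF'.fun_mul diff_re.differentiableAt).const_mul 2)
          ((hG'.fun_mul diff_im.differentiableAt).const_mul 2),
        ContinuousLinearMap.add_apply,
        fderiv_const_mul (hF'.fun_mul diff_re.differentiableAt) 2,
        fderiv_const_mul (hG'.fun_mul diff_im.differentiableAt) 2,
        fderiv_fun_mul hF' diff_re.differentiableAt, fderiv_fun_mul hG' diff_im.differentiableAt]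
      simp [fderiv_re', fderiv_im']; ring
    have d2 : Py (fun z => -(2 * (G z * z.re)) - 2 * (H z * z.im)) z₀
        = -(2 * (Py G z₀ * z₀.re)) - 2 * (Py H z₀ * z₀.im + H z₀) := by
      simp only [Py]
      rw [fderiv_fun_sub (((hG'.fun_mul diff_re.differentiableAt).const_mul 2).fun_neg)
          ((hH'.fun_mul diff_im.differentiableAt).const_mul 2),
        ContinuousLinearMap.sub_apply, fderiv_fun_neg, ContinuousLinearMap.neg_apply,
        fderiv_const_mul (hG'.fun_mul diff_re.differentiableAt) 2,
        fderiv_const_mul (hH'.fun_mul diff_im.differentiableAt) 2,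
        fderiv_fun_mul hG' diff_re.differentiableAt, fderiv_fun_mul hH' diff_im.differentiableAt]
      simp [fderiv_re', fderiv_im']; ring
    rw [d1, d2] at h0
    have hFH : F z₀ = H z₀ := by
      linear_combination ((1:ℝ)/2) * h0 - z₀.re * eq1 + z₀.im * eq2
    have hdiv : b z₀ / s z₀ = a z₀ / s z₀ := hFH
    field_simp [ne_of_gt hspos] at hdiv
    exact hdiv.symm
  exact ⟨hab, hczero⟩


end
end
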